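/- Let f : W → V be an injective linear map between finite-dimensional real vector spaces, P ⊆ V a polytope, and F a face of P with f⁻¹(relint F) ≠ ∅. Then the conormal cone satisfies N(f⁻¹(F), f⁻¹(P)) = f*(N(F,P)), the image of N(F,P) under the adjoint map f* : V* → W*. -/

import Mathlib

/-!
Given `ξ` in the conormal cone of the preimage, pick `w₀` with `f w₀ ∈ relint F`. Then `ξ` is
nonpositive on `f⁻¹ K`, where `K` is the cone generated by `P - f w₀`. As `P` is a polytope, `K`
is finitely generated, hence closed (conic Carathéodory), so separating `(0, -1)` from the closed
cone `graph (f, ξ) + K × 0` in `V × ℝ` extends `ξ` to some `η` on `V` with `η ≤ 0` on `K`.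
Thus `η` is maximised over `P` at `f w₀`, and a linear functional maximised over `F` at a point
of `relint F` is constant on `F`.
-/

open Set

variable {W V : Type*} [NormedAddCommGroup W] [NormedSpace ℝ W]
  [NormedAddCommGroup V] [NormedSpace ℝ V]

/-- A polytope is the convex hull of finitely many points. -/
def IsPolytope (P : Set V) : Prop :=
  ∃ s : Finset V, P = convexHull ℝ (s : Set V)

/-- `F` is a face of the polytope `P`. -/
def IsFaceOf (P F : Set V) : Prop :=
  F = P ∨ ∃ f : V →ₗ[ℝ] ℝ, f ≠ 0 ∧ ∃ α : ℝ,
    (∀ x ∈ P, f x ≤ α) ∧ F = P ∩ {x | f x = α}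

/-- The conormal cone of `P` at the face `F`. -/
def conormalCone {U : Type*} [AddCommGroup U] [Module ℝ U] (P F : Set U) :
    Set (Module.Dual ℝ U) :=
  {ξ | ∀ v ∈ F, ∀ x ∈ P, ξ x ≤ ξ v}

open Filter Topology

namespace PointedCone

variable {E : Type*} [AddCommGroup E] [Module ℝ E]

theorem mem_hull_finset_iff {t : Finset E} {x : E} :
    x ∈ hull ℝ (t : Set E) ↔ ∃ c : E → ℝ, (∀ y ∈ t, 0 ≤ c y) ∧ ∑ y ∈ t, c y • y = x := by
  classical
  rw [Submodule.mem_span_finset]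
  constructor
  · rintro ⟨c, -, rfl⟩
    exact ⟨fun y => c y, fun y _ => (c y).2, rfl⟩
  · rintro ⟨c, hc, rfl⟩
    refine ⟨fun y => if hy : y ∈ t then ⟨c y, hc y hy⟩ else 0,
      fun y hy => Finset.mem_coe.2 (by_contra fun h => hy (by simp [h])),
      Finset.sum_congr rfl fun y hy => by simp [hy]⟩

theorem exists_mem_hull_erase [DecidableEq E] {t : Finset E} {x : E}
    (hx : x ∈ hull ℝ (t : Set E)) (ht : ¬LinearIndepOn ℝ id (t : Set E)) :
    ∃ y ∈ t, x ∈ hull ℝ (t.erase y : Set E) := by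
  obtain ⟨c, hc, rfl⟩ := mem_hull_finset_iff.1 hx
  obtain ⟨g, hg, y₀, hy₀, hgy₀⟩ : ∃ g : E → ℝ, ∑ y ∈ t, g y • y = 0 ∧ ∃ y₀ ∈ t, 0 < g y₀ := by
    obtain ⟨g, hg, y₀, hy₀, hne⟩ := not_linearIndepOn_finset_iff.1 ht
    rcases hne.lt_or_gt with hneg | hpos
    · exact ⟨-g, by simpa [neg_smul] using hg, y₀, hy₀, by simpa using hneg⟩
    · exact ⟨g, hg, y₀, hy₀, hpos⟩
  -- move the coefficients `c` along the dependence `g` until the first of them vanishes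
  obtain ⟨y, hy, hmin⟩ := (t.filter (0 < g ·)).exists_min_image (fun y => c y / g y)
    ⟨y₀, Finset.mem_filter.2 ⟨hy₀, hgy₀⟩⟩
  rw [Finset.mem_filter] at hy
  set μ := c y / g y
  refine ⟨y, hy.1, mem_hull_finset_iff.2 ⟨fun z => c z - μ * g z, fun z hz => ?_, ?_⟩⟩
  · have hzt := Finset.mem_of_mem_erase hz
    rcases lt_or_ge 0 (g z) with hgz | hgz
    · have := hmin z (Finset.mem_filter.2 ⟨hzt, hgz⟩)
      rw [le_div_iff₀ hgz] at this
      linarith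
    · have : μ * g z ≤ 0 := mul_nonpos_of_nonneg_of_nonpos (div_nonneg (hc y hy.1) hy.2.le) hgz
      linarith [hc z hzt]
  · have hμ : c y - μ * g y = 0 := by simp [μ, div_mul_cancel₀ _ hy.2.ne']
    rw [Finset.sum_erase _ (by simp [hμ])]
    simp only [sub_smul, mul_smul, Finset.sum_sub_distrib, ← Finset.smul_sum, hg, smul_zero,
      sub_zero]

theorem exists_linearIndepOn_of_mem_hull {s : Finset E} {x : E} (hx : x ∈ hull ℝ (s : Set E)) :
    ∃ t ⊆ s, LinearIndepOn ℝ id (t : Set E) ∧ x ∈ hull ℝ (t : Set E) := by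
  classical
  obtain ⟨t, ht, hmin⟩ := (s.powerset.filter fun t : Finset E => x ∈ hull ℝ (t : Set E))
    |>.exists_min_image Finset.card ⟨s, Finset.mem_filter.2 ⟨Finset.mem_powerset_self s, hx⟩⟩
  rw [Finset.mem_filter, Finset.mem_powerset] at ht
  refine ⟨t, ht.1, by_contra fun hli => ?_, ht.2⟩
  obtain ⟨y, hy, hxy⟩ := exists_mem_hull_erase ht.2 hli
  have := hmin (t.erase y) (Finset.mem_filter.2
    ⟨Finset.mem_powerset.2 ((t.erase_subset y).trans ht.1), hxy⟩)
  rw [Finset.card_erase_of_mem hy] at this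
  have := Finset.card_pos.2 ⟨y, hy⟩
  omega

variable [TopologicalSpace E] [IsTopologicalAddGroup E] [ContinuousSMul ℝ E] [T2Space E]

theorem isClosed_hull_of_linearIndepOn {t : Finset E} (ht : LinearIndepOn ℝ id (t : Set E)) :
    IsClosed (hull ℝ (t : Set E) : Set E) := by
  classical
  have himage : (hull ℝ (t : Set E) : Set E) =
      Fintype.linearCombination ℝ (fun y : t => (y : E)) '' {c | 0 ≤ c} := by
    ext x
    rw [SetLike.mem_coe, mem_hull_finset_iff]
    constructor
    · rintro ⟨c, hc, rfl⟩
      refine ⟨fun y => c y, fun y => hc y y.2, ?_⟩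
      rw [Fintype.linearCombination_apply, Finset.univ_eq_attach]
      exact Finset.sum_attach t fun y => c y • y
    · rintro ⟨c, hc, rfl⟩
      refine ⟨fun y => if hy : y ∈ t then c ⟨y, hy⟩ else 0,
        fun y hy => by simpa [hy] using hc ⟨y, hy⟩, ?_⟩
      rw [Fintype.linearCombination_apply, ← Finset.sum_coe_sort t]
      simp
  rw [himage]
  exact (LinearMap.isClosedEmbedding_of_injective (LinearMap.ker_eq_bot.2
    ht.fintypeLinearCombination_injective)).isClosedMap _ isClosed_Ici

theorem isClosed_hull_finset (s : Finset E) : IsClosed (hull ℝ (s : Set E) : Set E) := by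
  classical
  have hunion : (hull ℝ (s : Set E) : Set E) =
      ⋃ t ∈ s.powerset.filter fun t : Finset E => LinearIndepOn ℝ id (t : Set E),
        (hull ℝ (t : Set E) : Set E) := by
    ext x
    simp only [mem_iUnion, Finset.mem_filter, Finset.mem_powerset, SetLike.mem_coe, exists_prop]
    refine ⟨fun hx => ?_, fun ⟨t, ⟨hts, _⟩, hx⟩ => Submodule.span_mono (by simpa using hts) hx⟩
    obtain ⟨t, hts, hli, hx⟩ := exists_linearIndepOn_of_mem_hull hx
    exact ⟨t, ⟨hts, hli⟩, hx⟩
  rw [hunion]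
  exact isClosed_biUnion_finset fun t ht =>
    isClosed_hull_of_linearIndepOn (Finset.mem_filter.1 ht).2

theorem isClosed_of_fg {C : PointedCone ℝ E} (hC : C.FG) : IsClosed (C : Set E) := by
  obtain ⟨s, rfl⟩ := hC
  exact isClosed_hull_finset s

end PointedCone

theorem exists_dualMap_eq_and_nonpos_of_fg {M E : Type*} [AddCommGroup M] [Module ℝ M]
    [NormedAddCommGroup E] [NormedSpace ℝ E] [FiniteDimensional ℝ E]
    {K : PointedCone ℝ E} (hK : K.FG) (f : M →ₗ[ℝ] E) (ξ : Module.Dual ℝ M)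
    (h : ∀ w, f w ∈ K → ξ w ≤ 0) :
    ∃ η : Module.Dual ℝ E, f.dualMap η = ξ ∧ ∀ v ∈ K, η v ≤ 0 := by
  set G : PointedCone ℝ (E × ℝ) := PointedCone.ofSubmodule (LinearMap.range (f.prod ξ))
  set D : PointedCone ℝ (E × ℝ) := G ⊔ K.map (LinearMap.inl ℝ E ℝ)
  have hD : ((0 : E), (-1 : ℝ)) ∉ D := by
    intro hmem
    obtain ⟨_, ⟨w, rfl⟩, _, ⟨k, hk, rfl⟩, hsum⟩ := Submodule.mem_sup.1 hmem
    simp only [LinearMap.prod_apply, Function.prod_apply, LinearMap.coe_restrictScalars,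
      LinearMap.coe_inl, Prod.mk_add_mk, add_zero, Prod.ext_iff] at hsum
    have := h (-w) (by rwa [map_neg, neg_eq_of_add_eq_zero_right hsum.1])
    rw [map_neg, hsum.2] at this
    norm_num at this
  have hDfg : D.FG :=
    (Submodule.FG.restrictScalars (IsNoetherian.noetherian _)).sup (hK.map _)
  obtain ⟨φ, hφD, hφ⟩ :=
    ProperCone.hyperplane_separation_point ⟨D, PointedCone.isClosed_of_fg hDfg⟩ hD
  have hφ_apply (a : E) (b : ℝ) : φ (a, b) = φ (a, 0) + b * φ (0, 1) := by
    rw [← smul_eq_mul, ← map_smul, ← map_add, Prod.smul_mk, smul_zero, smul_eq_mul, mul_one,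
      Prod.mk_add_mk, add_zero, zero_add]
  have hβ : 0 < φ (0, 1) := by
    rw [hφ_apply, Prod.mk_zero_zero, map_zero] at hφ
    linarith
  have hG (w : M) : 0 ≤ φ (f w, ξ w) := hφD _ (Submodule.mem_sup_left ⟨w, rfl⟩)
  have hgraph (w : M) : φ (f w, ξ w) = 0 := by
    have := hG (-w)
    rw [map_neg, map_neg, ← Prod.neg_mk, map_neg] at this
    exact le_antisymm (by linarith) (hG w)
  refine ⟨-(φ (0, 1))⁻¹ • ((φ : E × ℝ →ₗ[ℝ] ℝ) ∘ₗ LinearMap.inl ℝ E ℝ), ?_, fun v hv => ?_⟩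
  · ext w
    have := hgraph w
    rw [hφ_apply] at this
    simp only [map_smul, LinearMap.smul_apply, LinearMap.dualMap_apply, LinearMap.coe_comp,
      ContinuousLinearMap.coe_coe, LinearMap.coe_inl, Function.comp_apply, smul_eq_mul, neg_mul]
    field_simp
    linarith
  · have := hφD (v, 0) (Submodule.mem_sup_right ⟨v, hv, rfl⟩)
    simp only [LinearMap.smul_apply, LinearMap.coe_comp, ContinuousLinearMap.coe_coe,
      LinearMap.coe_inl, Function.comp_apply, smul_eq_mul, neg_mul, Left.neg_nonpos_iff]
    exact mul_nonneg (inv_nonneg.2 hβ.le) this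

section Geometry

variable {E : Type*} [NormedAddCommGroup E] [NormedSpace ℝ E]

theorem exists_pos_add_smul_mem_of_mem_hull {P : Set E} (hP : Convex ℝ P) {p v : E} (hp : p ∈ P)
    (hv : v ∈ PointedCone.hull ℝ ((· - p) '' P)) : ∃ r : ℝ, 0 < r ∧ p + r • v ∈ P := by
  have hQ : Convex ℝ ((· - p) '' P) := by
    simpa [sub_eq_add_neg] using hP.translate_preimage_left p
  have h0 : (ConvexCone.hull ℝ ((· - p) '' P)).Pointed :=
    ConvexCone.subset_hull ⟨p, hp, sub_self p⟩
  have hv' := Submodule.span_le (p := (ConvexCone.hull ℝ _).toPointedCone h0) |>.2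
    ConvexCone.subset_hull hv
  obtain ⟨r, hr, _, ⟨x, hx, rfl⟩, rfl⟩ := (ConvexCone.mem_hull_of_convex hQ).1 hv'
  refine ⟨r⁻¹, inv_pos.2 hr, ?_⟩
  simpa [smul_smul, inv_mul_cancel₀ hr.ne'] using hx

theorem exists_pos_add_smul_sub_mem_of_mem_intrinsicInterior {F : Set E} {p v : E}
    (hp : p ∈ intrinsicInterior ℝ F) (hv : v ∈ F) : ∃ t : ℝ, 0 < t ∧ p + t • (p - v) ∈ F := by
  obtain ⟨q, hq, rfl⟩ := hp
  have hline (t : ℝ) : (q : E) + t • ((q : E) - v) ∈ affineSpan ℝ F := by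
    simpa [vsub_eq_sub, vadd_eq_add, add_comm] using
      AffineSubspace.smul_vsub_vadd_mem _ t q.2 (subset_affineSpan ℝ F hv) q.2
  let γ : ℝ → affineSpan ℝ F := fun t => ⟨q + t • (q - v), hline t⟩
  have hγ : Continuous γ := by fun_prop
  have hγ0 : γ 0 = q := by ext; simp [γ]
  have hev : ∀ᶠ t in 𝓝[>] 0, γ t ∈ interior ((↑) ⁻¹' F) :=
    nhdsWithin_le_nhds (hγ.continuousAt.preimage_mem_nhds (isOpen_interior.mem_nhds (hγ0 ▸ hq)))
  obtain ⟨t, ht, htpos⟩ := (hev.and self_mem_nhdsWithin).exists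
  exact ⟨t, htpos, interior_subset (s := ((↑) ⁻¹' F : Set (affineSpan ℝ F))) ht⟩

theorem IsMaxOn.eq_of_mem_intrinsicInterior {F : Set E} {p v : E} {η : Module.Dual ℝ E}
    (h : IsMaxOn η F p) (hp : p ∈ intrinsicInterior ℝ F) (hv : v ∈ F) : η v = η p := by
  obtain ⟨t, ht, hq⟩ := exists_pos_add_smul_sub_mem_of_mem_intrinsicInterior hp hv
  have hfar : η (p + t • (p - v)) ≤ η p := h hq
  rw [map_add, map_smul, map_sub, smul_eq_mul] at hfar
  exact le_antisymm (h hv) (by nlinarith)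

end Geometry

theorem IsFaceOf.subset {P F : Set V} (h : IsFaceOf P F) : F ⊆ P := by
  rcases h with rfl | ⟨_, -, _, -, rfl⟩
  exacts [subset_rfl, inter_subset_left]

theorem image_dualMap_conormalCone_subset {M N : Type*} [AddCommGroup M] [Module ℝ M]
    [AddCommGroup N] [Module ℝ N] (f : M →ₗ[ℝ] N) (P F : Set N) :
    f.dualMap '' conormalCone P F ⊆ conormalCone (f ⁻¹' P) (f ⁻¹' F) := by
  rintro _ ⟨η, hη, rfl⟩ v hv x hx
  exact hη (f v) hv (f x) hx

theorem mem_conormalCone_of_isMaxOn {E : Type*} [NormedAddCommGroup E] [NormedSpace ℝ E]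
    {P F : Set E} {p : E} {η : Module.Dual ℝ E} (hFP : F ⊆ P) (hp : p ∈ intrinsicInterior ℝ F)
    (h : IsMaxOn η P p) : η ∈ conormalCone P F := fun _ hv _ hx =>
  (h hx).trans_eq ((h.on_subset hFP).eq_of_mem_intrinsicInterior hp hv).symm

theorem conormalCone_preimage_general [FiniteDimensional ℝ V]
    (f : W →ₗ[ℝ] V) {P F : Set V}
    (hP : IsPolytope P) (hF : IsFaceOf P F)
    (hri : (f ⁻¹' (intrinsicInterior ℝ F)).Nonempty) :
    conormalCone (f ⁻¹' P) (f ⁻¹' F) = f.dualMap '' conormalCone P F := by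
  refine Subset.antisymm (fun ξ hξ => ?_) (image_dualMap_conormalCone_subset f P F)
  obtain ⟨s, rfl⟩ := hP
  obtain ⟨w₀, hw₀⟩ := hri
  have hw₀F : f w₀ ∈ F := intrinsicInterior_subset hw₀
  set K := PointedCone.hull ℝ ((· - f w₀) '' (s : Set V))
  have hK (w : W) (hw : f w ∈ K) : ξ w ≤ 0 := by
    obtain ⟨r, hr, hmem⟩ := exists_pos_add_smul_mem_of_mem_hull (convex_convexHull ℝ _)
      (hF.subset hw₀F) (Submodule.span_mono (image_mono (subset_convexHull ℝ _)) hw)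
    have hle := hξ w₀ hw₀F (w₀ + r • w) (by simpa using hmem)
    rw [map_add, map_smul, smul_eq_mul, add_le_iff_nonpos_right] at hle
    exact nonpos_of_mul_nonpos_right hle hr
  obtain ⟨η, rfl, hηK⟩ := exists_dualMap_eq_and_nonpos_of_fg
    (Submodule.fg_span (s.finite_toSet.image _)) f ξ hK
  have hmax : IsMaxOn η (convexHull ℝ (s : Set V)) (f w₀) := fun x hx =>
    convexHull_min (fun y hy => by simpa using hηK _ (PointedCone.subset_hull ⟨y, hy, rfl⟩))
      (convex_halfSpace_le η.isLinear _) hx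
  exact ⟨η, mem_conormalCone_of_isMaxOn hF.subset hw₀ hmax, rfl⟩

/-- For an injective linear map `f : W → V`, a polytope `P ⊆ V` and a face
`F` of `P` with `f⁻¹(relint F) ≠ ∅`, one has `N(f⁻¹(F), f⁻¹(P)) = f*(N(F, P))`. -/
theorem conormalCone_preimage [FiniteDimensional ℝ W] [FiniteDimensional ℝ V]
    (f : W →ₗ[ℝ] V) (hf : Function.Injective f) {P F : Set V}
    (hP : IsPolytope P) (hF : IsFaceOf P F)
    (hri : (f ⁻¹' (intrinsicInterior ℝ F)).Nonempty) :
    conormalCone (f ⁻¹' P) (f ⁻¹' F) = f.dualMap '' conormalCone P F :=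
  conormalCone_preimage_general f hP hF hri
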